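/- Let n ≥ 2 and let I be an ideal of ℂ[X,Y] of codimension n that is supported at the origin and satisfies I + σ(I) = ⟨X,Y⟩. Then there exist complex numbers μ₂, μ₃, …, μₙ with |μ₂| < 1 such that either I or σ(I) equals the ideal of ℂ[X,Y] generated by the two elements Xⁿ and −Y + μ₂X + μ₃X² + ⋯ + μₙX^{n−1}. -/

import Mathlib

set_option maxHeartbeats 1000000
set_option synthInstance.maxHeartbeats 1000000

open MvPolynomial Module

/-- The conjugation `σ` of `ℂ[X,Y]`: complex conjugation on the coefficients
composed with the exchange of the two variables. -/
noncomputable def sigmaConj : MvPolynomial (Fin 2) ℂ →+* MvPolynomial (Fin 2) ℂ :=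
  (MvPolynomial.rename (Equiv.swap (0 : Fin 2) 1)).toRingHom.comp
    (MvPolynomial.map (starRingEnd ℂ))

abbrev R2 : Type := MvPolynomial (Fin 2) ℂ


lemma sigmaC (a : ℂ) : sigmaConj (C a) = C (starRingEnd ℂ a) := by
  simp [sigmaConj]

lemma sigmaX (i : Fin 2) : sigmaConj (X i) = X (Equiv.swap (0:Fin 2) 1 i) := by
  simp [sigmaConj]

lemma sigmaSigma (f : R2) : sigmaConj (sigmaConj f) = f := by
  induction f using MvPolynomial.induction_on with
  | C a => simp [sigmaC]
  | add p q hp hq => simp [map_add, hp, hq]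
  | mul_X p i hp => simp [map_mul, hp, sigmaX]

lemma sigmaSurj : Function.Surjective sigmaConj := fun f => ⟨sigmaConj f, sigmaSigma f⟩

lemma mapSigmaSigma (I : Ideal R2) : (I.map sigmaConj).map sigmaConj = I := by
  rw [Ideal.map_map]
  have : (sigmaConj.comp sigmaConj) = RingHom.id R2 := RingHom.ext sigmaSigma
  rw [this, Ideal.map_id]

noncomputable def L : R2 →ₗ[ℂ] ℂ × ℂ where
  toFun f := (coeff (Finsupp.single 0 1) f, coeff (Finsupp.single 1 1) f)
  map_add' p q := by simp [coeff_add]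
  map_smul' c p := by simp [coeff_smul, Prod.smul_def]

lemma L_X0 : L (X 0 : R2) = (1, 0) := by
  simp [L, coeff_X', Finsupp.single_eq_single_iff]

lemma L_X1 : L (X 1 : R2) = (0, 1) := by
  simp [L, coeff_X', Finsupp.single_eq_single_iff]

lemma L_sigma (f : R2) : L (sigmaConj f) = (starRingEnd ℂ (L f).2, starRingEnd ℂ (L f).1) := by
  have h0 : (Finsupp.single (0:Fin 2) 1 : Fin 2 →₀ ℕ) =
      Finsupp.mapDomain (Equiv.swap (0:Fin 2) 1) (Finsupp.single 1 1) := by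
    simp [Finsupp.mapDomain_single]
  have h1 : (Finsupp.single (1:Fin 2) 1 : Fin 2 →₀ ℕ) =
      Finsupp.mapDomain (Equiv.swap (0:Fin 2) 1) (Finsupp.single 0 1) := by
    simp [Finsupp.mapDomain_single]
  have c0 : coeff (Finsupp.single 0 1) (sigmaConj f)
      = starRingEnd ℂ (coeff (Finsupp.single 1 1) f) := by
    simp only [sigmaConj, RingHom.comp_apply, AlgHom.toRingHom_eq_coe, RingHom.coe_coe]
    rw [h0, coeff_rename_mapDomain _ (Equiv.swap (0:Fin 2) 1).injective, coeff_map]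
  have c1 : coeff (Finsupp.single 1 1) (sigmaConj f)
      = starRingEnd ℂ (coeff (Finsupp.single 0 1) f) := by
    simp only [sigmaConj, RingHom.comp_apply, AlgHom.toRingHom_eq_coe, RingHom.coe_coe]
    rw [h1, coeff_rename_mapDomain _ (Equiv.swap (0:Fin 2) 1).injective, coeff_map]
  simp only [L, LinearMap.coe_mk, AddHom.coe_mk, c0, c1]


noncomputable def mm : Ideal R2 := Ideal.span {X 0, X 1}

/-- KEY substitution lemma -/
lemma key_sub (Φ : R2 →ₐ[ℂ] R2) (f : R2) :
    f - Φ f ∈ Ideal.span {X 0 - Φ (X 0), X 1 - Φ (X 1)} := by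
  set J := Ideal.span {X 0 - Φ (X 0), X 1 - Φ (X 1)} with hJ
  induction f using MvPolynomial.induction_on with
  | C a => simp [algHom_C Φ a]
  | add p q hp hq =>
      have : p + q - Φ (p + q) = (p - Φ p) + (q - Φ q) := by rw [map_add]; ring
      rw [this]; exact add_mem hp hq
  | mul_X p i hp =>
      have : p * X i - Φ (p * X i) = (p - Φ p) * X i + Φ p * (X i - Φ (X i)) := by
        rw [map_mul]; ring
      rw [this]
      refine add_mem (Ideal.mul_mem_right _ _ hp) (Ideal.mul_mem_left _ _ ?_)
      fin_cases i
      · exact Ideal.subset_span (Or.inl rfl)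
      · exact Ideal.subset_span (Or.inr rfl)

noncomputable def ev0 : R2 →ₐ[ℂ] ℂ := MvPolynomial.aeval 0

lemma cdecomp (f : R2) : f - C (ev0 f) ∈ mm := by
  have := key_sub ((Algebra.ofId ℂ R2).comp ev0) f
  simpa [mm, ev0, Algebra.ofId_apply, algebraMap_eq] using this

lemma const_mem_mm (f : R2) (hf : f ∈ mm) : constantCoeff f = 0 := by
  rw [mm, Ideal.mem_span_pair] at hf
  obtain ⟨a, b, rfl⟩ := hf
  simp

lemma ev0_eq_const (f : R2) : ev0 f = constantCoeff f := by
  have h := const_mem_mm _ (cdecomp f)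
  rw [map_sub] at h
  simp only [constantCoeff_C] at h
  exact (sub_eq_zero.mp h).symm

lemma ker_ev0 : RingHom.ker ev0.toRingHom = mm := by
  apply le_antisymm
  · intro f hf
    have h2 : (ev0 f : ℂ) = 0 := hf
    have := cdecomp f
    rwa [h2, map_zero, sub_zero] at this
  · rw [mm, Ideal.span_le]
    rintro z (rfl | rfl) <;> simp [RingHom.mem_ker, ev0]

lemma finrank_quot_mm : Module.finrank ℂ (R2 ⧸ mm) = 1 := by
  have hsurj : Function.Surjective ev0 := fun c => ⟨C c, by simp [ev0]⟩
  have e := (Ideal.quotientEquivAlgOfEq ℂ ker_ev0.symm).trans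
    (Ideal.quotientKerAlgEquivOfSurjective hsurj)
  rw [e.toLinearEquiv.finrank_eq]
  exact Module.finrank_self ℂ

/-- Nakayama-style iteration -/
lemma nakayama (J : Ideal R2) (k : ℕ) (hk : mm ^ k ≤ J) (h : mm ≤ J ⊔ mm * mm) : mm ≤ J := by
  have step : ∀ j : ℕ, mm ≤ J ⊔ mm ^ (j + 1) := by
    intro j
    induction j with
    | zero => simpa using le_sup_right.trans (le_refl _)
    | succ j ih =>
        have h2 : mm * mm ≤ J ⊔ mm ^ (j + 2) := by
          calc mm * mm ≤ mm * (J ⊔ mm ^ (j+1)) := Ideal.mul_mono_right ih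
          _ ≤ J ⊔ mm ^ (j + 2) := by
              rw [Ideal.mul_sup]
              apply sup_le
              · exact le_trans Ideal.mul_le_right le_sup_left
              · rw [← pow_succ']
                exact le_sup_right
        calc mm ≤ J ⊔ mm * mm := h
        _ ≤ J ⊔ (J ⊔ mm ^ (j+2)) := sup_le_sup_left h2 _
        _ = J ⊔ mm ^ (j + 2) := by rw [← sup_assoc, sup_idem]
  calc mm ≤ J ⊔ mm ^ (k + 1) := step k
  _ ≤ J ⊔ mm ^ k := sup_le_sup_left (Ideal.pow_le_pow_right (Nat.le_succ k)) _
  _ ≤ J ⊔ J := sup_le_sup_left hk _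
  _ = J := sup_idem J


lemma add_eq_single {i : Fin 2} {a b : Fin 2 →₀ ℕ} (h : a + b = Finsupp.single i 1) :
    a = 0 ∨ b = 0 := by
  have happ : ∀ j, a j + b j = Finsupp.single i 1 j := fun j => by
    rw [← Finsupp.add_apply, h]
  have hi := happ i
  rw [Finsupp.single_eq_same] at hi
  have hne : ∀ j, j ≠ i → a j = 0 ∧ b j = 0 := by
    intro j hj
    have := happ j
    rw [Finsupp.single_eq_of_ne' (Ne.symm hj)] at this
    omega
  rcases Nat.add_eq_one_iff.mp hi with ⟨h1, _⟩ | ⟨_, h2⟩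
  · left
    ext j
    by_cases hj : j = i
    · rw [hj]; exact h1
    · exact (hne j hj).1
  · right
    ext j
    by_cases hj : j = i
    · rw [hj]; exact h2
    · exact (hne j hj).2

lemma coeff_single_mul_eq_zero (i : Fin 2) (p q : R2) (hp : constantCoeff p = 0)
    (hq : constantCoeff q = 0) : coeff (Finsupp.single i 1) (p * q) = 0 := by
  rw [coeff_mul]
  apply Finset.sum_eq_zero
  intro x hx
  rcases add_eq_single (Finset.HasAntidiagonal.mem_antidiagonal.mp hx) with h | h
  · have : coeff x.1 p = 0 := by rw [h]; exact hp
    rw [this, zero_mul]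
  · have : coeff x.2 q = 0 := by rw [h]; exact hq
    rw [this, mul_zero]

lemma L_mul_mm {p q : R2} (hp : p ∈ mm) (hq : q ∈ mm) : L (p * q) = 0 := by
  have hp' := const_mem_mm p hp
  have hq' := const_mem_mm q hq
  simp only [L, LinearMap.coe_mk, AddHom.coe_mk, Prod.mk_eq_zero]
  exact ⟨coeff_single_mul_eq_zero 0 p q hp' hq', coeff_single_mul_eq_zero 1 p q hp' hq'⟩

lemma L_mm2 {f : R2} (hf : f ∈ mm * mm) : L f = 0 := by
  refine Submodule.mul_induction_on hf (fun p hp q hq => L_mul_mm hp hq) fun x y hx hy => ?_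
  rw [map_add, hx, hy, add_zero]

lemma X0_mem_mm : (X 0 : R2) ∈ mm := Ideal.subset_span (Or.inl rfl)
lemma X1_mem_mm : (X 1 : R2) ∈ mm := Ideal.subset_span (Or.inr rfl)


lemma mem_mm2 {f : R2} (hf : f ∈ mm) (h : L f = 0) : f ∈ mm * mm := by
  rw [mm, Ideal.mem_span_pair] at hf
  obtain ⟨a, b, hab⟩ := hf
  have hL : L (a * X 0 + b * X 1) = (ev0 a, ev0 b) := by
    have da := cdecomp a
    have db := cdecomp b
    have expand : a * X 0 + b * X 1 =
        (ev0 a) • (X 0 : R2) + (ev0 b) • (X 1 : R2)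
          + ((a - C (ev0 a)) * X 0 + (b - C (ev0 b)) * X 1) := by
      rw [smul_eq_C_mul, smul_eq_C_mul]; ring
    rw [expand, map_add, map_add, map_add, map_smul, map_smul, L_X0, L_X1,
      L_mul_mm da X0_mem_mm, L_mul_mm db X1_mem_mm]
    simp [Prod.ext_iff]
  rw [hab, h] at hL
  have hab2 : ev0 a = 0 ∧ ev0 b = 0 := by
    constructor
    · exact (congrArg Prod.fst hL).symm
    · exact (congrArg Prod.snd hL).symm
  have ha := hab2.1
  have hb := hab2.2
  have ha' : a ∈ mm := by have := cdecomp a; rwa [ha, map_zero, sub_zero] at this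
  have hb' : b ∈ mm := by have := cdecomp b; rwa [hb, map_zero, sub_zero] at this
  rw [← hab]
  exact add_mem (Ideal.mul_mem_mul ha' X0_mem_mm) (Ideal.mul_mem_mul hb' X1_mem_mm)


noncomputable def VV (I : Ideal R2) : Submodule ℂ (ℂ × ℂ) :=
  Submodule.map L (I.restrictScalars ℂ)

lemma L_lin (z : ℂ × ℂ) : L (C z.1 * X 0 + C z.2 * X 1 : R2) = z := by
  rw [← smul_eq_C_mul, ← smul_eq_C_mul, map_add, map_smul, map_smul, L_X0, L_X1]
  simp [Prod.ext_iff]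

lemma VV_ne_top (n k : ℕ) (hn : 2 ≤ n) (I : Ideal R2)
    (hcodim : Module.finrank ℂ (R2 ⧸ I) = n)
    (hk : mm ^ k ≤ I) (hIm : I ≤ mm) : VV I ≠ ⊤ := by
  intro htop
  have hmem : ∀ z : ℂ × ℂ, ∃ p ∈ I, L p = z := by
    intro z
    have : z ∈ VV I := htop ▸ Submodule.mem_top
    obtain ⟨p, hp, hLp⟩ := this
    exact ⟨p, hp, hLp⟩
  have hXmem : ∀ (w : R2), w ∈ mm → w ∈ I ⊔ mm * mm := by
    intro w hw
    obtain ⟨p, hp, hLp⟩ := hmem (L w)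
    have hwp : w - p ∈ mm * mm := by
      apply mem_mm2 (sub_mem hw (hIm hp))
      rw [map_sub, hLp, sub_self]
    have : w = p + (w - p) := by ring
    rw [this]
    exact Submodule.mem_sup.mpr ⟨p, hp, w - p, hwp, rfl⟩
  have hmm_le : mm ≤ I ⊔ mm * mm := by
    rw [mm, Ideal.span_le]
    rintro z (rfl | rfl)
    · exact hXmem _ X0_mem_mm
    · exact hXmem _ X1_mem_mm
  have hImm : I = mm := le_antisymm hIm (nakayama I k hk hmm_le)
  rw [hImm, finrank_quot_mm] at hcodim
  omega

lemma claim1 (n k : ℕ) (hn : 2 ≤ n) (I : Ideal R2)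
    (hcodim : Module.finrank ℂ (R2 ⧸ I) = n)
    (hcodimσ : Module.finrank ℂ (R2 ⧸ I.map sigmaConj) = n)
    (hk : mm ^ k ≤ I) (hkσ : mm ^ k ≤ I.map sigmaConj)
    (hIm : I ≤ mm) (hIσm : I.map sigmaConj ≤ mm)
    (hmax : I ⊔ Ideal.map sigmaConj I = mm) :
    (∃ μ0 g, ‖μ0‖ < 1 ∧ g ∈ I ∧ L g = (μ0, -1)) ∨
    (∃ μ0 g, ‖μ0‖ < 1 ∧ g ∈ I.map sigmaConj ∧ L g = (μ0, -1)) := by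
  have hVne : VV I ≠ ⊤ := VV_ne_top n k hn I hcodim hk hIm
  have hVσne : VV (I.map sigmaConj) ≠ ⊤ := VV_ne_top n k hn _ hcodimσ hkσ hIσm
  have hτ : ∀ w ∈ VV I, ((starRingEnd ℂ) w.2, (starRingEnd ℂ) w.1) ∈ VV (I.map sigmaConj) := by
    rintro w ⟨p, hp, rfl⟩
    exact ⟨sigmaConj p, Ideal.mem_map_of_mem _ hp, L_sigma p⟩
  have hτ' : ∀ w ∈ VV (I.map sigmaConj), ((starRingEnd ℂ) w.2, (starRingEnd ℂ) w.1) ∈ VV I := by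
    rintro w ⟨p, hp, rfl⟩
    refine ⟨sigmaConj p, ?_, L_sigma p⟩
    have hp' : p ∈ I.map sigmaConj := hp
    have h2 : sigmaConj p ∈ (I.map sigmaConj).map sigmaConj := Ideal.mem_map_of_mem _ hp'
    rwa [mapSigmaSigma] at h2
  have hVtop : VV I ⊔ VV (I.map sigmaConj) = ⊤ := by
    rw [eq_top_iff]
    rintro z -
    have hz : (C z.1 * X 0 + C z.2 * X 1 : R2) ∈ I ⊔ I.map sigmaConj := by
      rw [hmax]
      exact add_mem (Ideal.mul_mem_left _ _ X0_mem_mm) (Ideal.mul_mem_left _ _ X1_mem_mm)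
    obtain ⟨p, hp, q, hq, hpq⟩ := Submodule.mem_sup.mp hz
    have : z = L p + L q := by rw [← map_add, hpq, L_lin]
    rw [this]
    exact Submodule.mem_sup.mpr ⟨L p, ⟨p, hp, rfl⟩, L q, ⟨q, hq, rfl⟩, rfl⟩
  -- pick nonzero vector in VV I
  have hVbot : VV I ≠ ⊥ := by
    intro hbot
    apply hVσne
    rw [← hVtop, hbot, bot_sup_eq]
  obtain ⟨v, hv, hv0⟩ := Submodule.ne_bot_iff _ |>.mp hVbot
  obtain ⟨a, b⟩ := v
  have smul_pair : ∀ (c x y : ℂ), c • ((x, y) : ℂ × ℂ) = (c * x, c * y) := fun c x y => rfl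
  rcases lt_trichotomy (‖a‖) (‖b‖) with hab | hab | hab
  · -- |a| < |b| : good for I
    left
    have hbpos : 0 < ‖b‖ := lt_of_le_of_lt (norm_nonneg a) hab
    have hb : b ≠ 0 := norm_pos_iff.mp hbpos
    have hscale : (-b⁻¹) • ((a, b) : ℂ × ℂ) ∈ VV I := Submodule.smul_mem _ _ hv
    have hvec : (-b⁻¹) • ((a, b) : ℂ × ℂ) = (-b⁻¹ * a, -1) := by
      rw [smul_pair]
      congr 1
      field_simp
    rw [hvec] at hscale
    obtain ⟨g, hg, hLg⟩ := hscale
    refine ⟨-b⁻¹ * a, g, ?_, hg, hLg⟩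
    have habs : ‖-b⁻¹ * a‖ = ‖a‖ / ‖b‖ := by
      rw [norm_mul, norm_neg, norm_inv]
      ring
    rw [habs]
    exact (div_lt_one hbpos).mpr hab
  · -- |a| = |b| : contradiction
    exfalso
    have ha : a ≠ 0 := by
      intro h
      apply hv0
      rw [h] at hab ⊢
      have : b = 0 := by
        rw [← norm_eq_zero]
        rw [← hab]; simp
      rw [this]
      rfl
    have hv0' : ((a, b) : ℂ × ℂ) ≠ 0 := hv0
    have hfin2 : Module.finrank ℂ (ℂ × ℂ) = 2 := by
      rw [Module.finrank_prod, Module.finrank_self]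
    have hlt : Module.finrank ℂ (VV I) < 2 := by
      rw [← hfin2]
      exact Submodule.finrank_lt hVne
    have hsle : Submodule.span ℂ {((a, b) : ℂ × ℂ)} ≤ VV I := by
      rw [Submodule.span_le, Set.singleton_subset_iff]
      exact hv
    have hs1 : Module.finrank ℂ (Submodule.span ℂ {((a, b) : ℂ × ℂ)}) = 1 :=
      finrank_span_singleton hv0'
    have heq : Submodule.span ℂ {((a, b) : ℂ × ℂ)} = VV I :=
      Submodule.eq_of_le_of_finrank_le hsle (by omega)
    have hconjmem : ((starRingEnd ℂ) b, (starRingEnd ℂ) a) ∈ Submodule.span ℂ {((a, b) : ℂ × ℂ)} := by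
      rw [Submodule.mem_span_singleton]
      refine ⟨starRingEnd ℂ b / a, ?_⟩
      rw [smul_pair]
      have hnsq : Complex.normSq a = Complex.normSq b := by
        rw [← Complex.sq_norm, ← Complex.sq_norm, hab]
      have e1 : (starRingEnd ℂ) b / a * a = (starRingEnd ℂ) b := by field_simp
      have e2 : (starRingEnd ℂ) b / a * b = (starRingEnd ℂ) a := by
        rw [div_mul_eq_mul_div, div_eq_iff ha, mul_comm ((starRingEnd ℂ) b) b,
          mul_comm ((starRingEnd ℂ) a) a, Complex.mul_conj, Complex.mul_conj]
        exact_mod_cast congrArg (fun t : ℝ => (t : ℂ)) hnsq.symm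
      rw [e1, e2]
    have hVσle : VV (I.map sigmaConj) ≤ VV I := by
      intro w hw
      have h1 := hτ' w hw
      rw [← heq, Submodule.mem_span_singleton] at h1
      obtain ⟨c, hc⟩ := h1
      rw [smul_pair] at hc
      have hc1 : c * a = (starRingEnd ℂ) w.2 := congrArg Prod.fst hc
      have hc2 : c * b = (starRingEnd ℂ) w.1 := congrArg Prod.snd hc
      have hw1 : w.1 = (starRingEnd ℂ) c * (starRingEnd ℂ) b := by
        have := congrArg (starRingEnd ℂ) hc2
        rw [map_mul] at this
        simpa using this.symm
      have hw2 : w.2 = (starRingEnd ℂ) c * (starRingEnd ℂ) a := by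
        have := congrArg (starRingEnd ℂ) hc1
        rw [map_mul] at this
        simpa using this.symm
      have hwe : w = (starRingEnd ℂ) c • (((starRingEnd ℂ) b, (starRingEnd ℂ) a) : ℂ × ℂ) := by
        rw [smul_pair, ← hw1, ← hw2]
      rw [hwe, ← heq]
      exact Submodule.smul_mem _ _ hconjmem
    apply hVne
    rw [eq_top_iff, ← hVtop]
    exact sup_le le_rfl hVσle
  · -- |b| < |a| : good for σ I
    right
    have hapos : 0 < ‖a‖ := lt_of_le_of_lt (norm_nonneg b) hab
    have ha : a ≠ 0 := norm_pos_iff.mp hapos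
    have ha' : (starRingEnd ℂ) a ≠ 0 := by simpa using ha
    have hτv := hτ (a, b) hv
    have hscale : (-((starRingEnd ℂ) a)⁻¹) • (((starRingEnd ℂ) b, (starRingEnd ℂ) a) : ℂ × ℂ)
        ∈ VV (I.map sigmaConj) := Submodule.smul_mem _ _ hτv
    have hvec : (-((starRingEnd ℂ) a)⁻¹) • (((starRingEnd ℂ) b, (starRingEnd ℂ) a) : ℂ × ℂ)
        = (-((starRingEnd ℂ) a)⁻¹ * (starRingEnd ℂ) b, -1) := by
      rw [smul_pair]
      congr 1
      field_simp
    rw [hvec] at hscale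
    obtain ⟨g, hg, hLg⟩ := hscale
    refine ⟨_, g, ?_, hg, hLg⟩
    have habs : ‖-((starRingEnd ℂ) a)⁻¹ * (starRingEnd ℂ) b‖
        = ‖b‖ / ‖a‖ := by
      rw [norm_mul, norm_neg, norm_inv, Complex.norm_conj, Complex.norm_conj]
      ring
    rw [habs]
    exact (div_lt_one hapos).mpr hab


noncomputable def ψ : Polynomial ℂ →ₐ[ℂ] R2 := Polynomial.aeval (MvPolynomial.X 0)

lemma psi_const (r : Polynomial ℂ) : MvPolynomial.constantCoeff (ψ r) = r.coeff 0 := by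
  rw [ψ, Polynomial.aeval_def, Polynomial.hom_eval₂]
  have h0 : MvPolynomial.constantCoeff (MvPolynomial.X 0 : R2) = 0 := by simp
  rw [h0, Polynomial.eval₂_at_zero]
  simp [MvPolynomial.algebraMap_eq]

theorem main (n k : ℕ) (hn : 2 ≤ n) (I : Ideal R2)
    (hcodim : Module.finrank ℂ (R2 ⧸ I) = n)
    (hk : mm ^ k ≤ I) (hIm : I ≤ mm)
    (μ0 : ℂ) (habs : ‖μ0‖ < 1) (g : R2) (hg : g ∈ I)
    (hLg : L g = (μ0, -1)) :
    ∃ μ : ℕ → ℂ, ‖μ 2‖ < 1 ∧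
      I = Ideal.span {MvPolynomial.X 0 ^ n,
        -MvPolynomial.X 1 + ∑ j ∈ Finset.Icc 2 n, MvPolynomial.C (μ j) * MvPolynomial.X 0 ^ (j - 1)} := by
  -- Step 1 : mm ≤ I ⊔ span {X 0}
  set h' : R2 := g - MvPolynomial.C μ0 * MvPolynomial.X 0 + MvPolynomial.X 1 with hh'
  have hgexp : g = MvPolynomial.C μ0 * MvPolynomial.X 0 - MvPolynomial.X 1 + h' := by
    rw [hh']; ring
  have h'mm : h' ∈ mm := add_mem (sub_mem (hIm hg) (Ideal.mul_mem_left _ _ X0_mem_mm)) X1_mem_mm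
  have h'2 : h' ∈ mm * mm := by
    apply mem_mm2 h'mm
    rw [hh', map_add, map_sub, hLg, ← MvPolynomial.smul_eq_C_mul, map_smul, L_X0, L_X1]
    simp [Prod.ext_iff]
  have hmmJx : mm ≤ I ⊔ Ideal.span {MvPolynomial.X 0} := by
    apply nakayama _ k (le_trans hk le_sup_left)
    rw [mm, Ideal.span_le]
    rintro z (rfl | rfl)
    · show (MvPolynomial.X 0 : R2) ∈ I ⊔ Ideal.span {MvPolynomial.X 0} ⊔ mm * mm
      exact Submodule.mem_sup_left (Submodule.mem_sup_right (Ideal.subset_span rfl))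
    · -- X 1 = (C μ0 * X 0 - g) + h'
      have hX1 : (MvPolynomial.X 1 : R2) = (MvPolynomial.C μ0 * MvPolynomial.X 0 - g) + h' := by
        rw [hh']; ring
      show (MvPolynomial.X 1 : R2) ∈ I ⊔ Ideal.span {MvPolynomial.X 0} ⊔ mm * mm
      rw [hX1]
      refine Submodule.mem_sup.mpr ⟨MvPolynomial.C μ0 * MvPolynomial.X 0 - g, ?_, h', h'2, rfl⟩
      refine Submodule.mem_sup.mpr ⟨-g, neg_mem hg, MvPolynomial.C μ0 * MvPolynomial.X 0,
        Ideal.mul_mem_left _ _ (Ideal.subset_span rfl), by ring⟩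
  -- Step 2 : reduction to polynomials in X 0
  have hstep : ∀ j : ℕ, (∀ u : R2, ∃ r : Polynomial ℂ, MvPolynomial.X 0 ^ (j+1) * u - ψ r ∈ I) →
      (∀ u : R2, ∃ r : Polynomial ℂ, MvPolynomial.X 0 ^ j * u - ψ r ∈ I) := by
    intro j ih u
    set c : ℂ := ev0 u with hc
    have hu' := cdecomp u
    obtain ⟨i', hi', s, hs, hsum⟩ := Submodule.mem_sup.mp (hmmJx hu')
    obtain ⟨w, hw⟩ := Ideal.mem_span_singleton'.mp hs
    obtain ⟨r1, hr1⟩ := ih w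
    refine ⟨Polynomial.C c * Polynomial.X ^ j + r1, ?_⟩
    have hu : u = MvPolynomial.C c + i' + w * MvPolynomial.X 0 := by
      have h2 : u - MvPolynomial.C c = i' + s := hsum.symm
      rw [← hw] at h2
      linear_combination h2
    have hψ : ψ (Polynomial.C c * Polynomial.X ^ j + r1)
        = MvPolynomial.C c * MvPolynomial.X 0 ^ j + ψ r1 := by
      rw [map_add, map_mul, map_pow]
      simp [ψ]
    have hiden : MvPolynomial.X 0 ^ j * u - ψ (Polynomial.C c * Polynomial.X ^ j + r1)
        = MvPolynomial.X 0 ^ j * i' + (MvPolynomial.X 0 ^ (j+1) * w - ψ r1) := by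
      rw [hψ, hu]; ring
    rw [hiden]
    exact add_mem (Ideal.mul_mem_left _ _ hi') hr1
  have hU0 : ∀ u : R2, ∃ r : Polynomial ℂ, u - ψ r ∈ I := by
    have hT : ∀ t : ℕ, ∀ u : R2, ∃ r : Polynomial ℂ, MvPolynomial.X 0 ^ (k - t) * u - ψ r ∈ I := by
      intro t
      induction t with
      | zero =>
          intro u
          refine ⟨0, ?_⟩
          rw [map_zero, sub_zero, Nat.sub_zero]
          exact Ideal.mul_mem_right _ _ (hk (Ideal.pow_mem_pow X0_mem_mm k))
      | succ t ih =>
          by_cases ht : t < k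
          · have heq : k - (t+1) + 1 = k - t := by omega
            apply hstep
            rw [heq]
            exact ih
          · have heq : k - (t+1) = k - t := by omega
            rw [heq]
            exact ih
    intro u
    obtain ⟨r, hr⟩ := hT k u
    rw [Nat.sub_self, pow_zero, one_mul] at hr
    exact ⟨r, hr⟩
  -- Step 3 : structure of the quotient
  haveI : FiniteDimensional ℂ (R2 ⧸ I) := Module.finite_of_finrank_pos (by omega)
  haveI := Classical.decEq (R2 ⧸ I)
  set A := R2 ⧸ I with hA
  set π : R2 →ₐ[ℂ] A := Ideal.Quotient.mkₐ ℂ I with hπ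
  set x : A := π (MvPolynomial.X 0) with hx
  have hπψ : ∀ r : Polynomial ℂ, π (ψ r) = Polynomial.aeval x r := by
    intro r
    rw [ψ, Polynomial.aeval_algHom_apply]
  have hπmem : ∀ f : R2, f ∈ I → π f = 0 := fun f hf => Ideal.Quotient.eq_zero_iff_mem.mpr hf
  have hxk : x ^ k = 0 := by
    rw [hx, ← map_pow]
    exact hπmem _ (hk (Ideal.pow_mem_pow X0_mem_mm k))
  have hxint : IsIntegral ℂ x := IsIntegral.of_finite ℂ x
  have hpdvd : minpoly ℂ x ∣ Polynomial.X ^ k := by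
    apply minpoly.dvd
    rw [map_pow, Polynomial.aeval_X]
    exact hxk
  obtain ⟨i, hik, hassoc⟩ := (dvd_prime_pow Polynomial.prime_X k).mp hpdvd
  have hpeq : minpoly ℂ x = Polynomial.X ^ i :=
    Polynomial.eq_of_monic_of_associated (minpoly.monic hxint) (Polynomial.monic_X_pow i) hassoc
  have hxi : x ^ i = 0 := by
    have := minpoly.aeval ℂ x
    rwa [hpeq, map_pow, Polynomial.aeval_X] at this
  -- span of powers is everything
  have hspan : Submodule.span ℂ (Set.range fun j : ℕ => x ^ j) = ⊤ := by
    rw [eq_top_iff]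
    rintro a -
    obtain ⟨f, rfl⟩ := Ideal.Quotient.mkₐ_surjective ℂ I a
    obtain ⟨r, hr⟩ := hU0 f
    have : (Ideal.Quotient.mkₐ ℂ I) f = Polynomial.aeval x r := by
      have h0 : π (f - ψ r) = 0 := hπmem _ hr
      rw [map_sub, sub_eq_zero] at h0
      rw [← hπψ]
      exact h0
    rw [this, Polynomial.aeval_eq_sum_range (x := x)]
    apply Submodule.sum_mem
    intro c _
    exact Submodule.smul_mem _ _ (Submodule.subset_span ⟨c, rfl⟩)
  have hin : i = n := by
    have hle1 : i ≤ n := by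
      have hli := linearIndependent_pow (K := ℂ) x
      rw [hpeq, Polynomial.natDegree_X_pow] at hli
      have := hli.fintype_card_le_finrank
      rwa [Fintype.card_fin, hcodim] at this
    have hle2 : n ≤ i := by
      have hsub : Set.range (fun j : ℕ => x ^ j)
          ⊆ ↑(Submodule.span ℂ (((Finset.range i).image (fun j => x ^ j) : Finset A) : Set A)) := by
        rintro _ ⟨j, rfl⟩
        show x ^ j ∈ ↑(Submodule.span ℂ (((Finset.range i).image (fun j => x ^ j) : Finset A) : Set A))
        by_cases hj : j < i
        · exact Submodule.subset_span (Finset.mem_coe.mpr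
            (Finset.mem_image_of_mem _ (Finset.mem_range.mpr hj)))
        · have hz : x ^ j = 0 := by
            have h2 : x ^ j = x ^ i * x ^ (j - i) := by
              rw [← pow_add]
              congr 1
              omega
            rw [h2, hxi, zero_mul]
          rw [hz]
          exact Submodule.zero_mem _
      set s : Finset A := (Finset.range i).image (fun j => x ^ j) with hsdef
      have htop : Submodule.span ℂ (s : Set A) = ⊤ := by
        rw [eq_top_iff, ← hspan]
        exact Submodule.span_le.mpr hsub
      have h1 : Module.finrank ℂ (Submodule.span ℂ (s : Set A)) ≤ s.card :=
        finrank_span_finset_le_card s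
      rw [htop, finrank_top, hcodim] at h1
      calc n ≤ s.card := h1
      _ ≤ i := le_trans (Finset.card_image_le) (le_of_eq (Finset.card_range i))
    omega
  rw [hin] at hpeq hxi
  have hX0n : MvPolynomial.X 0 ^ n ∈ I := by
    rw [← Ideal.Quotient.eq_zero_iff_mem]
    have : π (MvPolynomial.X 0 ^ n) = x ^ n := by rw [map_pow]
    exact this.trans hxi
  have hZ : ∀ q : Polynomial ℂ, Polynomial.aeval x q = 0 → q.degree < (n : ℕ) → q = 0 := by
    intro q haq hdq
    by_contra hq0
    have := minpoly.degree_le_of_ne_zero ℂ x hq0 haq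
    rw [hpeq, Polynomial.degree_X_pow] at this
    exact absurd (lt_of_le_of_lt this hdq) (lt_irrefl _)
  -- Step 4 : the polynomial r with X 1 ≡ ψ r
  obtain ⟨r1, hr1⟩ := hU0 (MvPolynomial.X 1)
  set r : Polynomial ℂ := r1 %ₘ (Polynomial.X ^ n) with hrdef
  have hmon : (Polynomial.X ^ n : Polynomial ℂ).Monic := Polynomial.monic_X_pow n
  have hr1r : ψ r1 - ψ r ∈ I := by
    have : r1 - r = Polynomial.X ^ n * (r1 /ₘ Polynomial.X ^ n) := by
      have := Polynomial.modByMonic_add_div r1 (Polynomial.X ^ n)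
      rw [hrdef]
      linear_combination -this
    have h2 : ψ r1 - ψ r = MvPolynomial.X 0 ^ n * ψ (r1 /ₘ Polynomial.X ^ n) := by
      rw [← map_sub, this, map_mul, map_pow]
      simp [ψ]
    rw [h2]
    exact Ideal.mul_mem_right _ _ hX0n
  have hr : MvPolynomial.X 1 - ψ r ∈ I := by
    have : MvPolynomial.X 1 - ψ r = (MvPolynomial.X 1 - ψ r1) + (ψ r1 - ψ r) := by ring
    rw [this]
    exact add_mem hr1 hr1r
  have hrdeg : r.degree < (n : ℕ) := by
    have := Polynomial.degree_modByMonic_lt r1 hmon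
    rwa [Polynomial.degree_X_pow] at this
  have hrdeg' : r.natDegree < n := by
    by_cases h0 : r = 0
    · rw [h0, Polynomial.natDegree_zero]; omega
    · exact (Polynomial.natDegree_lt_iff_degree_lt h0).mpr hrdeg
  have hr0 : r.coeff 0 = 0 := by
    have h1 := const_mem_mm _ (hIm hr)
    rw [map_sub, psi_const] at h1
    have h2 : MvPolynomial.constantCoeff (MvPolynomial.X 1 : R2) = 0 := by simp
    rw [h2, zero_sub, neg_eq_zero] at h1
    exact h1
  -- coeff 1 of r equals μ0
  have hmm2' : mm * mm ≤ I ⊔ Ideal.span {MvPolynomial.X 0 ^ 2} := by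
    rw [Ideal.mul_le]
    intro p hp q hq
    obtain ⟨i1, hi1, s1, hs1, hps⟩ := Submodule.mem_sup.mp (hmmJx hp)
    obtain ⟨w1, hw1⟩ := Ideal.mem_span_singleton'.mp hs1
    obtain ⟨i2, hi2, s2, hs2, hqs⟩ := Submodule.mem_sup.mp (hmmJx hq)
    obtain ⟨w2, hw2⟩ := Ideal.mem_span_singleton'.mp hs2
    have hpq : p * q = (i1 * q + w1 * MvPolynomial.X 0 * i2)
        + (w1 * w2) * MvPolynomial.X 0 ^ 2 := by
      rw [← hps, ← hqs, ← hw1, ← hw2]; ring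
    rw [hpq]
    refine Submodule.mem_sup.mpr ⟨_, ?_, _, Ideal.mul_mem_left _ _ (Ideal.subset_span rfl), rfl⟩
    exact add_mem (Ideal.mul_mem_right _ _ hi1) (Ideal.mul_mem_left _ _ hi2)
  obtain ⟨i2, hi2, v, hv, hh'sum⟩ := Submodule.mem_sup.mp (hmm2' h'2)
  obtain ⟨w, hw⟩ := Ideal.mem_span_singleton'.mp hv
  obtain ⟨rw_, hrw⟩ := hU0 w
  have hμc : r.coeff 1 = μ0 := by
    set F : Polynomial ℂ := Polynomial.C μ0 * Polynomial.X + Polynomial.X ^ 2 * rw_ - r with hF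
    have hψF : ψ F = MvPolynomial.C μ0 * MvPolynomial.X 0
        + MvPolynomial.X 0 ^ 2 * ψ rw_ - ψ r := by
      rw [hF, map_sub, map_add, map_mul, map_mul, map_pow]
      simp [ψ]
    have hψFI : ψ F ∈ I := by
      have hE : g + (MvPolynomial.X 1 - ψ r) ∈ I := add_mem hg hr
      have hE2 : ψ F = (g + (MvPolynomial.X 1 - ψ r))
          - (i2 + MvPolynomial.X 0 ^ 2 * (w - ψ rw_)) := by
        rw [hψF, hgexp, ← hh'sum, ← hw]; ring
      rw [hE2]
      exact sub_mem hE (add_mem hi2 (Ideal.mul_mem_left _ _ hrw))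
    have haF : Polynomial.aeval x F = 0 := by
      rw [← hπψ]
      exact hπmem _ hψFI
    set q : Polynomial ℂ := F %ₘ (Polynomial.X ^ n) with hq
    have hqeq : q = F - Polynomial.X ^ n * (F /ₘ Polynomial.X ^ n) := by
      have := Polynomial.modByMonic_add_div F (Polynomial.X ^ n)
      rw [hq]; linear_combination this
    have haq : Polynomial.aeval x q = 0 := by
      rw [hqeq, map_sub, haF, map_mul, map_pow, Polynomial.aeval_X, hxi]
      ring
    have hdq : q.degree < (n : ℕ) := by
      have := Polynomial.degree_modByMonic_lt F hmon
      rwa [Polynomial.degree_X_pow] at this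
    have hq0 : q = 0 := hZ q haq hdq
    have hc1 : q.coeff 1 = μ0 - r.coeff 1 := by
      rw [hqeq, hF]
      simp only [Polynomial.coeff_sub, Polynomial.coeff_add]
      have e1 : (Polynomial.C μ0 * Polynomial.X : Polynomial ℂ).coeff 1 = μ0 := by
        rw [Polynomial.coeff_C_mul, Polynomial.coeff_X_one, mul_one]
      have e2 : (Polynomial.X ^ 2 * rw_ : Polynomial ℂ).coeff 1 = 0 := by
        rw [mul_comm, Polynomial.coeff_mul_X_pow']
        simp
      have e3 : (Polynomial.X ^ n * (F /ₘ Polynomial.X ^ n) : Polynomial ℂ).coeff 1 = 0 := by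
        rw [mul_comm, Polynomial.coeff_mul_X_pow']
        simp only [if_neg (by omega : ¬ n ≤ 1)]
      rw [e1, e2, e3]
      ring
    rw [hq0] at hc1
    simp only [Polynomial.coeff_zero] at hc1
    exact (eq_of_sub_eq_zero hc1.symm).symm
  -- Step 5 : conclusion
  refine ⟨fun j => r.coeff (j - 1), ?_, ?_⟩
  · show ‖r.coeff 1‖ < 1
    rw [hμc]; exact habs
  · -- bridging sum
    have hψr : ψ r = ∑ j ∈ Finset.Icc 2 n,
        MvPolynomial.C (r.coeff (j - 1)) * MvPolynomial.X 0 ^ (j - 1) := by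
      have hsum : ψ r = ∑ idx ∈ Finset.range n, r.coeff idx • (MvPolynomial.X 0 : R2) ^ idx :=
        Polynomial.aeval_eq_sum_range' hrdeg' (MvPolynomial.X 0 : R2)
      rw [hsum, Finset.range_eq_Ico, Finset.sum_eq_sum_Ico_succ_bot (by omega : 0 < n)]
      rw [hr0, zero_smul, zero_add]
      refine Finset.sum_nbij' (fun idx => idx + 1) (fun j => j - 1) ?_ ?_ ?_ ?_ ?_
      · intro a ha
        simp only [Finset.mem_Ico] at ha
        show a + 1 ∈ Finset.Icc 2 n
        simp only [Finset.mem_Icc]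
        omega
      · intro a ha
        simp only [Finset.mem_Icc] at ha
        show a - 1 ∈ Finset.Ico 1 n
        simp only [Finset.mem_Ico]
        omega
      · intro a ha
        show a + 1 - 1 = a
        omega
      · intro a ha
        simp only [Finset.mem_Icc] at ha
        show a - 1 + 1 = a
        omega
      · intro a ha
        show r.coeff a • (MvPolynomial.X 0 : R2) ^ a
            = MvPolynomial.C (r.coeff (a + 1 - 1)) * MvPolynomial.X 0 ^ (a + 1 - 1)
        rw [Nat.add_sub_cancel, MvPolynomial.smul_eq_C_mul]
    set G : R2 := ∑ j ∈ Finset.Icc 2 n,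
        MvPolynomial.C (r.coeff (j - 1)) * MvPolynomial.X 0 ^ (j - 1) with hG
    set J : Ideal R2 := Ideal.span {MvPolynomial.X 0 ^ n, -MvPolynomial.X 1 + G} with hJ
    have hgen2 : -MvPolynomial.X 1 + G ∈ I := by
      have : -MvPolynomial.X 1 + G = -(MvPolynomial.X 1 - ψ r) := by rw [hψr]; ring
      rw [this]
      exact neg_mem hr
    have hJI : J ≤ I := by
      rw [hJ, Ideal.span_le]
      rintro z (rfl | rfl)
      · exact hX0n
      · exact hgen2
    have hIJ : I ≤ J := by
      intro f hf
      set e : R2 →ₐ[ℂ] Polynomial ℂ :=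
        MvPolynomial.aeval (![Polynomial.X, r] : Fin 2 → Polynomial ℂ) with he
      set Φ : R2 →ₐ[ℂ] R2 := ψ.comp e with hΦ
      have hΦ0 : Φ (MvPolynomial.X 0) = MvPolynomial.X 0 := by
        rw [hΦ, AlgHom.comp_apply, he, MvPolynomial.aeval_X]
        simp [ψ]
      have hΦ1 : Φ (MvPolynomial.X 1) = ψ r := by
        rw [hΦ, AlgHom.comp_apply, he, MvPolynomial.aeval_X]
        simp
      have hkey := key_sub Φ f
      rw [hΦ0, hΦ1, sub_self] at hkey
      have hsp : Ideal.span {(0 : R2), MvPolynomial.X 1 - ψ r} ≤ J := by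
        rw [Ideal.span_le]
        rintro z (rfl | rfl)
        · exact J.zero_mem
        · have : MvPolynomial.X 1 - ψ r = -(-MvPolynomial.X 1 + G) := by rw [hψr]; ring
          rw [this]
          exact neg_mem (Ideal.subset_span (Or.inr rfl))
      have hfΦ : f - ψ (e f) ∈ J := hsp hkey
      set q2 : Polynomial ℂ := e f %ₘ (Polynomial.X ^ n) with hq2
      have hq2eq : ψ (e f) - ψ q2 = MvPolynomial.X 0 ^ n * ψ (e f /ₘ Polynomial.X ^ n) := by
        have hmd := Polynomial.modByMonic_add_div (e f) (Polynomial.X ^ n)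
        have : e f - q2 = Polynomial.X ^ n * (e f /ₘ Polynomial.X ^ n) := by
          linear_combination -hmd
        rw [← map_sub, this, map_mul, map_pow]
        simp [ψ]
      have hfq : f - ψ q2 ∈ J := by
        have : f - ψ q2 = (f - ψ (e f)) + (ψ (e f) - ψ q2) := by ring
        rw [this]
        refine add_mem hfΦ ?_
        rw [hq2eq]
        exact Ideal.mul_mem_right _ _ (Ideal.subset_span (Or.inl rfl))
      have hq2I : ψ q2 ∈ I := by
        have : ψ q2 = f - (f - ψ q2) := by ring
        rw [this]
        exact sub_mem hf (hJI hfq)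
      have haq2 : Polynomial.aeval x q2 = 0 := by
        rw [← hπψ]
        exact hπmem _ hq2I
      have hdq2 : q2.degree < (n : ℕ) := by
        have := Polynomial.degree_modByMonic_lt (e f) hmon
        rwa [Polynomial.degree_X_pow] at this
      have hq20 : q2 = 0 := hZ q2 haq2 hdq2
      rwa [hq20, map_zero, sub_zero] at hfq
    exact le_antisymm hIJ hJI

noncomputable def chom : R2 →+* R2 := MvPolynomial.map (starRingEnd ℂ)

lemma chom_chom (f : R2) : chom (chom f) = f := by
  rw [chom, MvPolynomial.map_map]
  have : (starRingEnd ℂ).comp (starRingEnd ℂ) = RingHom.id ℂ := by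
    ext z; exact Complex.conj_conj z
  rw [this, MvPolynomial.map_id]

noncomputable def cEq : R2 ≃+* R2 :=
  { toFun := chom, invFun := chom, left_inv := chom_chom, right_inv := chom_chom,
    map_mul' := map_mul chom, map_add' := map_add chom }

lemma codim_map_sigma (I : Ideal R2) (n : ℕ) (hn : 0 < n)
    (h : Module.finrank ℂ (R2 ⧸ I) = n) :
    Module.finrank ℂ (R2 ⧸ I.map sigmaConj) = n := by
  haveI : FiniteDimensional ℂ (R2 ⧸ I) := Module.finite_of_finrank_pos (by omega)
  set J' : Ideal R2 := I.map chom with hJ'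
  -- step B : conj-equiv over ℝ
  have hcoe : (cEq : R2 →+* R2) = chom := rfl
  have hIJ' : J' = I.map (cEq : R2 →+* R2) := by rw [hcoe]
  have hf : ∀ t : ℝ, (Ideal.quotientEquiv I J' cEq hIJ') (algebraMap ℝ (R2 ⧸ I) t)
      = algebraMap ℝ (R2 ⧸ J') t := by
    intro t
    have h1 : algebraMap ℝ (R2 ⧸ I) t = Ideal.Quotient.mk I (MvPolynomial.C (t : ℂ)) := rfl
    have h2 : algebraMap ℝ (R2 ⧸ J') t = Ideal.Quotient.mk J' (MvPolynomial.C (t : ℂ)) := rfl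
    rw [h1, h2]
    rw [Ideal.quotientEquiv_mk I J' cEq hIJ' (MvPolynomial.C (t : ℂ))]
    congr 1
    have hce : cEq (MvPolynomial.C (t:ℂ)) = chom (MvPolynomial.C (t:ℂ)) := rfl
    rw [hce, chom, MvPolynomial.map_C]
    congr 1
    exact Complex.conj_ofReal t
  have eR : (R2 ⧸ I) ≃ₐ[ℝ] (R2 ⧸ J') := AlgEquiv.ofRingEquiv hf
  haveI : Module.Finite ℝ (R2 ⧸ I) := Module.Finite.trans ℂ (R2 ⧸ I)
  have finI : finrank ℝ (R2 ⧸ I) = 2 * n := by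
    rw [← Module.finrank_mul_finrank ℝ ℂ (R2 ⧸ I), Complex.finrank_real_complex, h]
  haveI : Module.Finite ℝ (R2 ⧸ J') := Module.Finite.equiv eR.toLinearEquiv
  have finJ : finrank ℝ (R2 ⧸ J') = 2 * n := by
    rw [← eR.toLinearEquiv.finrank_eq]
    exact finI
  haveI : Module.Finite ℂ (R2 ⧸ J') := Module.Finite.of_restrictScalars_finite ℝ ℂ _
  have finJC : finrank ℂ (R2 ⧸ J') = n := by
    have := Module.finrank_mul_finrank ℝ ℂ (R2 ⧸ J')
    rw [Complex.finrank_real_complex, finJ] at this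
    omega
  -- step A : rename equiv over ℂ
  have hmap : I.map sigmaConj = J'.map (MvPolynomial.rename (Equiv.swap (0:Fin 2) 1)).toRingHom := by
    rw [hJ', Ideal.map_map]
    rfl
  have hcoe2 : ((MvPolynomial.renameEquiv ℂ (Equiv.swap (0:Fin 2) 1) : R2 ≃ₐ[ℂ] R2) : R2 →+* R2)
      = (MvPolynomial.rename (Equiv.swap (0:Fin 2) 1)).toRingHom := by
    rfl
  have qA : (R2 ⧸ J') ≃ₐ[ℂ] (R2 ⧸ I.map sigmaConj) :=
    Ideal.quotientEquivAlg J' (I.map sigmaConj) (MvPolynomial.renameEquiv ℂ (Equiv.swap (0:Fin 2) 1))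
      (by rw [hmap, hcoe2])
  rw [← qA.toLinearEquiv.finrank_eq]
  exact finJC

theorem stmt0 (n : ℕ) (hn : 2 ≤ n) (I : Ideal (MvPolynomial (Fin 2) ℂ))
    (hcodim : Module.finrank ℂ (MvPolynomial (Fin 2) ℂ ⧸ I) = n)
    (hsupp : I.radical = Ideal.span {X 0, X 1})
    (hmax : I ⊔ Ideal.map sigmaConj I = Ideal.span {X 0, X 1}) :
    ∃ μ : ℕ → ℂ, ‖μ 2‖ < 1 ∧
      (I = Ideal.span {X 0 ^ n,
          -X 1 + ∑ j ∈ Finset.Icc 2 n, C (μ j) * X 0 ^ (j - 1)} ∨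
       Ideal.map sigmaConj I = Ideal.span {X 0 ^ n,
          -X 1 + ∑ j ∈ Finset.Icc 2 n, C (μ j) * X 0 ^ (j - 1)}) := by
  classical
  have hmmfg : (Ideal.span {X 0, X 1} : Ideal R2).FG :=
    ⟨{X 0, X 1}, by simp⟩
  obtain ⟨k, hk0⟩ := Ideal.exists_radical_pow_le_of_fg I (by rw [hsupp]; exact hmmfg)
  rw [hsupp] at hk0
  have hk' : mm ^ k ≤ I := hk0
  have hIm : I ≤ mm := le_trans Ideal.le_radical (le_of_eq hsupp)
  have hmax' : I ⊔ Ideal.map sigmaConj I = mm := hmax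
  have hmapmm : Ideal.map sigmaConj mm = mm := by
    rw [mm, Ideal.map_span]
    congr 1
    rw [Set.image_insert_eq, Set.image_singleton, sigmaX, sigmaX]
    simp [Equiv.swap_apply_left, Equiv.swap_apply_right, Set.pair_comm]
  have hkσ : mm ^ k ≤ I.map sigmaConj := by
    have h2 := Ideal.map_mono (f := sigmaConj) hk'
    rwa [Ideal.map_pow, hmapmm] at h2
  have hIσm : I.map sigmaConj ≤ mm := by
    have h2 := Ideal.map_mono (f := sigmaConj) hIm
    rwa [hmapmm] at h2
  have hcodimσ := codim_map_sigma I n (by omega) hcodim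
  rcases claim1 n k hn I hcodim hcodimσ hk' hkσ hIm hIσm hmax' with
    ⟨μ0, g, h1, h2, h3⟩ | ⟨μ0, g, h1, h2, h3⟩
  · obtain ⟨μ, hμ1, hμ2⟩ := main n k hn I hcodim hk' hIm μ0 h1 g h2 h3
    exact ⟨μ, hμ1, Or.inl hμ2⟩
  · obtain ⟨μ, hμ1, hμ2⟩ := main n k hn (I.map sigmaConj) hcodimσ hkσ hIσm μ0 h1 g h2 h3
    exact ⟨μ, hμ1, Or.inr hμ2⟩
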